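/- In the 4-cycle C_4, for every n ≥ 1 the closed walk (0123)^n 0 is homotopy equivalent to the trivial walk 0. -/

import Mathlib

namespace SimpleGraph

variable {V : Type*}

/-- One elementary homotopy move on walks: substitution (an interior vertex is
replaced by a common neighbor of its walk-neighbors), insertion (`v ↦ v w v`),
deletion (`v w v ↦ v`), performed anywhere in the walk via the `cons` closure. -/
inductive HStep (G : SimpleGraph V) : ∀ {u v : V}, G.Walk u v → G.Walk u v → Prop
  | subst {x a b y w : V} (hxa : G.Adj x a) (hay : G.Adj a y) (hxb : G.Adj x b)
      (hby : G.Adj b y) (p : G.Walk y w) :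
      HStep G (Walk.cons hxa (Walk.cons hay p)) (Walk.cons hxb (Walk.cons hby p))
  | insert {x w z : V} (h : G.Adj x w) (p : G.Walk x z) :
      HStep G p (Walk.cons h (Walk.cons h.symm p))
  | delete {x w z : V} (h : G.Adj x w) (p : G.Walk x z) :
      HStep G (Walk.cons h (Walk.cons h.symm p)) p
  | cons {x y z : V} (h : G.Adj x y) {p q : G.Walk y z} :
      HStep G p q → HStep G (Walk.cons h p) (Walk.cons h q)

/-- Homotopy of walks: the relation generated by the elementary moves. -/
def Homotopic (G : SimpleGraph V) {u v : V} (p q : G.Walk u v) : Prop :=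
  Relation.ReflTransGen (fun a b : G.Walk u v => G.HStep a b) p q


/-- The cycle graph `C_n` on vertex set `ZMod n`, with edges `{i, i+1}`. -/
def cycleZMod (n : ℕ) : SimpleGraph (ZMod n) :=
  SimpleGraph.fromRel (fun i j => j = i + 1)

lemma cycleZMod_adj {n : ℕ} {i j : ZMod n} (h1 : i ≠ j)
    (h2 : j = i + 1 ∨ i = j + 1) : (cycleZMod n).Adj i j :=
  (SimpleGraph.fromRel_adj _ _ _).mpr ⟨h1, h2⟩



/-- The closed walk 0 1 2 3 0 going once around the 4-cycle. -/
def c4loop : (cycleZMod 4).Walk 0 0 :=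
  Walk.cons (cycleZMod_adj (n := 4) (i := 0) (j := 1) (by decide) (by decide))
    (Walk.cons (cycleZMod_adj (n := 4) (i := 1) (j := 2) (by decide) (by decide))
      (Walk.cons (cycleZMod_adj (n := 4) (i := 2) (j := 3) (by decide) (by decide))
        (Walk.cons (cycleZMod_adj (n := 4) (i := 3) (j := 0) (by decide) (by decide))
          (Walk.nil : (cycleZMod 4).Walk 0 0))))

/-- The walk (0123)^n 0 around the 4-cycle. -/
def c4pow : ℕ → (cycleZMod 4).Walk 0 0
  | 0 => Walk.nil
  | n + 1 => c4loop.append (c4pow n)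

theorem homotopic_cons_cons_symm {G : SimpleGraph V} {x w z : V} (h : G.Adj x w)
    (p : G.Walk x z) : G.Homotopic (Walk.cons h (Walk.cons h.symm p)) p :=
  .single (.delete h p)

/-- Substituting `x` for `y` (a common neighbour of `a` and `b`) turns the square into
`x a x b x`, which cancels by two deletions. -/
theorem homotopic_square_cons {G : SimpleGraph V} {x a y b z : V} (hxa : G.Adj x a)
    (hay : G.Adj a y) (hyb : G.Adj y b) (hbx : G.Adj b x) (p : G.Walk x z) :
    G.Homotopic (Walk.cons hxa (Walk.cons hay (Walk.cons hyb (Walk.cons hbx p)))) p :=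
  .head (.cons hxa (.subst hay hyb hxa.symm hbx.symm (Walk.cons hbx p))) <|
    .head (.delete hxa _) (homotopic_cons_cons_symm hbx.symm p)

theorem c4loop_append_homotopic (p : (cycleZMod 4).Walk 0 0) :
    (cycleZMod 4).Homotopic (c4loop.append p) p :=
  homotopic_square_cons _ _ _ _ p

theorem c4pow_homotopic_nil_general (n : ℕ) :
    (cycleZMod 4).Homotopic (c4pow n) Walk.nil := by
  induction n with
  | zero => exact .refl
  | succ n ih => exact (c4loop_append_homotopic (c4pow n)).trans ih

/-- In the 4-cycle, for every positive n the closed walk (0123)^n 0 is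
homotopy equivalent to the trivial walk. -/
theorem c4pow_homotopic_nil (n : ℕ) (hn : 1 ≤ n) :
    (cycleZMod 4).Homotopic (c4pow n) Walk.nil :=
  c4pow_homotopic_nil_general n

end SimpleGraph
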